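/- Let V be a module for A ⋊ Der A (A = ℂ[t^{±1}]) on which A acts associatively. Then for every polynomial f ∈ ℂ[λ], every k ∈ ℕ and every v ∈ V, one has f((1 − t^{−1})d₀ − k) · (t−1)^{k+1} d_{−1} · v = (t−1)^{k+1} d_{−1} · f((1 − t^{−1})d₀) · v, where the operators act on V. -/

import Mathlib

open LaurentPolynomial

attribute [local instance 100] LieRing.ofAssociativeRing

/-! Write `b = t - 1` and `∂ = d_{-1} = d/dt`, so that `∂ b = 1` and `(1 - t⁻¹) d₀ = b ∂`.
For any such pair, `[b ∂, b^{k+1} ∂] = k b^{k+1} ∂`; applying `π`, the operators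
`X = π((1 - t⁻¹) d₀)` and `Y = π((t - 1)^{k+1} d_{-1})` satisfy `[X, Y] = k Y`, i.e.
`Y X = (X - k) Y`, and this intertwining relation passes from `X` to every polynomial `f(X)`. -/

theorem SemiconjBy.aeval {R S : Type*} [CommSemiring R] [Semiring S] [Algebra R S] {c a b : S}
    (h : SemiconjBy c a b) (f : Polynomial R) :
    SemiconjBy c (Polynomial.aeval a f) (Polynomial.aeval b f) := by
  induction f using Polynomial.induction_on' with
  | add p q hp hq => simpa only [map_add] using hp.add_right hq
  | monomial n r =>
    simp only [Polynomial.aeval_monomial]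
    exact SemiconjBy.mul_right (Algebra.commute_algebraMap_right r c) (h.pow_right n)

theorem SemiconjBy.sub_smul_one_of_lie_eq_smul {R S : Type*} [CommRing R] [Ring S] [Algebra R S]
    {x y : S} {r : R} (h : ⁅x, y⁆ = r • y) : SemiconjBy y x (x - r • 1) := by
  rw [Ring.lie_def] at h
  rw [SemiconjBy, sub_mul, smul_mul_assoc, one_mul, ← h]
  abel

theorem LaurentPolynomial.derivation_ext {R M : Type*} [CommSemiring R] [AddCommMonoid M]
    [Module R M] [Module R[T;T⁻¹] M]
    {D₁ D₂ : Derivation R R[T;T⁻¹] M} (h : ∀ n, D₁ (T n) = D₂ (T n)) : D₁ = D₂ := by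
  ext p
  induction p using LaurentPolynomial.induction_on' with
  | add p q hp hq => rw [map_add, map_add, hp, hq]
  | C_mul_T n a => rw [← smul_eq_C_mul, D₁.map_smul, D₂.map_smul, h]

namespace Derivation

variable {R A : Type*} [CommRing R] [CommRing A] [Algebra R A]

theorem lie_smul_smul_pow_of_apply_eq_one {D : Derivation R A A} {b : A} (hb : D b = 1) (n : ℕ) :
    ⁅b • D, b ^ (n + 1) • D⁆ = (n : R) • (b ^ (n + 1) • D) := by
  ext a
  simp only [commutator_apply, smul_apply, smul_eq_mul, leibniz, leibniz_pow, hb,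
    add_tsub_cancel_right, Nat.cast_smul_eq_nsmul, nsmul_eq_mul, Nat.cast_add, Nat.cast_one]
  ring

end Derivation

theorem poly_intertwine_general
    (V : Type*) [AddCommGroup V] [Module ℂ V]
    (π : Derivation ℂ (LaurentPolynomial ℂ) (LaurentPolynomial ℂ) →ₗ⁅ℂ⁆ Module.End ℂ V)
    (d : ℤ → Derivation ℂ (LaurentPolynomial ℂ) (LaurentPolynomial ℂ))
    (hd : ∀ m s : ℤ, d m (T s) = (s : ℂ) • T (m + s))
    (f : Polynomial ℂ) (k : ℕ) (v : V) :
    Polynomial.aeval (π ((1 - T (-1) : LaurentPolynomial ℂ) • d 0) - (k : ℂ) • 1) f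
        (π (((T 1 - 1 : LaurentPolynomial ℂ)) ^ (k + 1) • d (-1)) v) =
      π (((T 1 - 1 : LaurentPolynomial ℂ)) ^ (k + 1) • d (-1))
        (Polynomial.aeval (π ((1 - T (-1) : LaurentPolynomial ℂ) • d 0)) f v) := by
  have hd₀ : d 0 = (T 1 : LaurentPolynomial ℂ) • d (-1) := by
    refine LaurentPolynomial.derivation_ext fun s => ?_
    rw [Derivation.smul_apply, hd, hd, smul_eq_mul, mul_smul_comm, ← T_add]
    ring_nf
  have hX :
      (1 - T (-1) : LaurentPolynomial ℂ) • d 0 = (T 1 - 1 : LaurentPolynomial ℂ) • d (-1) := by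
    rw [hd₀, smul_smul, sub_mul, one_mul, ← T_add]
    norm_num [T_zero]
  have hb : d (-1) (T 1 - 1 : LaurentPolynomial ℂ) = 1 := by
    rw [map_sub, Derivation.map_one_eq_zero, hd]
    norm_num [T_zero]
  have hbracket := congrArg π (Derivation.lie_smul_smul_pow_of_apply_eq_one hb k)
  rw [← hX, LieHom.map_lie, map_smul π (k : ℂ)] at hbracket
  exact LinearMap.congr_fun
    ((SemiconjBy.sub_smul_one_of_lie_eq_smul hbracket).aeval f).eq.symm v

/-- Let `V` be a module for `A ⋊ Der A` (`A = ℂ[t^{±1}]`), given by a Lie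
algebra homomorphism `π : Der A → End(V)` and an associative (unital) action
`σ : A → End(V)` satisfying the semidirect-product compatibility
`[π(D), σ(a)] = σ(D a)`.  Then for every polynomial `f ∈ ℂ[λ]`, every `k ∈ ℕ` and every
`v ∈ V`:
`f((1 − t^{−1})d₀ − k) · (t−1)^{k+1} d_{−1} · v
  = (t−1)^{k+1} d_{−1} · f((1 − t^{−1})d₀) · v`. -/
theorem poly_intertwine
    (V : Type*) [AddCommGroup V] [Module ℂ V]
    (π : Derivation ℂ (LaurentPolynomial ℂ) (LaurentPolynomial ℂ) →ₗ⁅ℂ⁆ Module.End ℂ V)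
    (σ : LaurentPolynomial ℂ →ₐ[ℂ] Module.End ℂ V)
    (hcompat : ∀ (D : Derivation ℂ (LaurentPolynomial ℂ) (LaurentPolynomial ℂ))
      (a : LaurentPolynomial ℂ), π D * σ a - σ a * π D = σ (D a))
    (d : ℤ → Derivation ℂ (LaurentPolynomial ℂ) (LaurentPolynomial ℂ))
    (hd : ∀ m s : ℤ, d m (T s) = (s : ℂ) • T (m + s))
    (f : Polynomial ℂ) (k : ℕ) (v : V) :
    Polynomial.aeval (π ((1 - T (-1) : LaurentPolynomial ℂ) • d 0) - (k : ℂ) • 1) f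
        (π (((T 1 - 1 : LaurentPolynomial ℂ)) ^ (k + 1) • d (-1)) v) =
      π (((T 1 - 1 : LaurentPolynomial ℂ)) ^ (k + 1) • d (-1))
        (Polynomial.aeval (π ((1 - T (-1) : LaurentPolynomial ℂ) • d 0)) f v) :=
  poly_intertwine_general V π d hd f k v
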